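/- arXiv:2508.03023 — 2 statements merged into one kernel-verified Lean document; each statement's English description precedes it below -/
import Mathlib

section
/- Let μ ∈ ℂ with Re μ > −1/2, let t ∈ ℝ, let ε ∈ [−1/2, 1/2], and assume μ − ε + it ≠ 0. Then |Γ((μ+1+ε+it)/2) / Γ((μ−ε+it)/2)| ≤ ((Re μ + 3/2)/(Re μ + 1/2))² · |(μ+1+ε+it)/2|^(1/2+ε). -/
/-!
Write `z = x + iy` with `x > 0`. Euler's limit formula expresses `|Γ(z)| / Γ(x)` as the limit of
`∏_{j ≤ n} (1 + (y/(x+j))²)^(-1/2)`. Since `v ↦ log (1 + (y/v)²)` is convex and tends to `0`,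
shifting `z` by `s ∈ [0,1]` gains at least the factor `(|z|/x)^s` over the real ratio
`Γ(x+s)/Γ(x)`, and log-convexity of `Γ` on `(0, ∞)` bounds that ratio below by `x/(x+s)^(1-s)`.
Hence `|Γ(z)/Γ(z+s)| ≤ |z|^(-s) ((x+s)/x)^(1-s)`. The theorem is the case `z = (μ+1+ε+it)/2`,
`s = 1/2 - ε`: with `w = (μ-ε+it)/2` we have `w + 1 = z + s`, so `Γ(z)/Γ(w) = w Γ(z)/Γ(z+s)`,
and `|w| ≤ |z|`.
-/

open Complex Filter Set Finset Topology

noncomputable def logOneAddSqDiv (y v : ℝ) : ℝ := Real.log (1 + (y / v) ^ 2)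

theorem hasDerivAt_logOneAddSqDiv (y : ℝ) {v : ℝ} (hv : 0 < v) :
    HasDerivAt (logOneAddSqDiv y) (-(2 * y ^ 2) / (v * (v ^ 2 + y ^ 2))) v := by
  have hdiv : HasDerivAt (fun v => y / v) (-y / v ^ 2) v := by
    simpa [div_eq_mul_inv, neg_div] using (hasDerivAt_inv hv.ne').const_mul y
  have hsum : HasDerivAt (fun v => 1 + (y / v) ^ 2) (2 * (y / v) * (-y / v ^ 2)) v := by
    simpa using (hdiv.fun_pow 2).const_add 1
  refine (hsum.log (by positivity)).congr_deriv ?_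
  field_simp

theorem convexOn_logOneAddSqDiv (y : ℝ) : ConvexOn ℝ (Ioi 0) (logOneAddSqDiv y) := by
  refine MonotoneOn.convexOn_of_deriv (convex_Ioi 0)
    (fun v hv => (hasDerivAt_logOneAddSqDiv y hv).continuousAt.continuousWithinAt) ?_ ?_
  · rw [interior_Ioi]
    exact fun v hv => (hasDerivAt_logOneAddSqDiv y hv).differentiableAt.differentiableWithinAt
  · rw [interior_Ioi]
    intro u (hu : 0 < u) v (hv : 0 < v) huv
    rw [(hasDerivAt_logOneAddSqDiv y hu).deriv, (hasDerivAt_logOneAddSqDiv y hv).deriv,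
      neg_div, neg_div, neg_le_neg_iff]
    gcongr

theorem tendsto_logOneAddSqDiv_atTop (y : ℝ) :
    Tendsto (logOneAddSqDiv y) atTop (𝓝 0) := by
  have h : Tendsto (fun v => y / v) atTop (𝓝 0) := tendsto_const_nhds.div_atTop tendsto_id
  have hlog := ((h.pow 2).const_add 1).log (by norm_num)
  rw [zero_pow two_ne_zero, add_zero, Real.log_one] at hlog
  exact hlog

theorem Complex.norm_eq_re_mul_exp_logOneAddSqDiv {w : ℂ} (hw : 0 < w.re) :
    ‖w‖ = w.re * Real.exp (logOneAddSqDiv w.im w.re / 2) := by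
  have hsq : (w.re * Real.exp (logOneAddSqDiv w.im w.re / 2)) ^ 2 = w.re ^ 2 + w.im ^ 2 := by
    rw [mul_pow, ← Real.exp_nat_mul, Nat.cast_ofNat, mul_div_cancel₀ _ two_ne_zero,
      logOneAddSqDiv, Real.exp_log (by positivity)]
    field_simp
  rw [← Real.sqrt_sq (by positivity : 0 ≤ w.re * _), hsq, Complex.norm_def, normSq_apply]
  ring_nf

theorem ConvexOn.mul_sub_le_sum_range_sub_add {f : ℝ → ℝ} {x s : ℝ} (hf : ConvexOn ℝ (Ici x) f)
    (hs0 : 0 ≤ s) (hs1 : s ≤ 1) (n : ℕ) :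
    s * (f x - f (x + n)) ≤ ∑ j ∈ range n, (f (x + j) - f (x + s + j)) := by
  have hstep (j : ℕ) : s * (f (x + j) - f (x + (j + 1 : ℕ))) ≤ f (x + j) - f (x + s + j) := by
    have h := hf.2 (x := x + j) (y := x + (j + 1 : ℕ))
      (mem_Ici.2 (le_add_of_nonneg_right j.cast_nonneg))
      (mem_Ici.2 (le_add_of_nonneg_right (j + 1).cast_nonneg)) (sub_nonneg.2 hs1) hs0 (by ring)
    rw [smul_eq_mul, smul_eq_mul, smul_eq_mul, smul_eq_mul,
      show (1 - s) * (x + j) + s * (x + (j + 1 : ℕ)) = x + s + j by push_cast; ring] at h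
    linarith
  calc s * (f x - f (x + n))
      = ∑ j ∈ range n, s * (f (x + j) - f (x + (j + 1 : ℕ))) := by
        rw [← mul_sum, sum_range_sub' (fun j : ℕ => f (x + j)), Nat.cast_zero, add_zero]
    _ ≤ _ := sum_le_sum fun j _ => hstep j

theorem Real.GammaSeq_nonneg {x : ℝ} (hx : 0 ≤ x) (n : ℕ) : 0 ≤ Real.GammaSeq x n := by
  unfold Real.GammaSeq
  positivity

theorem Complex.norm_GammaSeq {w : ℂ} (hw : 0 < w.re) (n : ℕ) :
    ‖GammaSeq w n‖ = Real.GammaSeq w.re n *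
      Real.exp (-(∑ j ∈ range (n + 1), logOneAddSqDiv w.im (w.re + j)) / 2) := by
  have hfactor (j : ℕ) :
      ‖w + j‖ = (w.re + j) * Real.exp (logOneAddSqDiv w.im (w.re + j) / 2) := by
    have hre : 0 < (w + j).re := by simp only [add_re, natCast_re]; positivity
    simpa using norm_eq_re_mul_exp_logOneAddSqDiv hre
  rw [GammaSeq, Real.GammaSeq, norm_div, norm_mul, norm_natCast_cpow_of_re_ne_zero _ hw.ne',
    norm_prod, prod_congr rfl fun j _ => hfactor j, prod_mul_distrib, ← Real.exp_sum,
    norm_natCast, ← sum_div, neg_div, Real.exp_neg, ← div_div, div_eq_mul_inv _ (Real.exp _)]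

theorem Complex.GammaSeq_div_mul_exp_le_norm_GammaSeq_add_div {z : ℂ} (hz : 0 < z.re) {s : ℝ}
    (hs0 : 0 ≤ s) (hs1 : s ≤ 1) (n : ℕ) :
    Real.GammaSeq (z.re + s) n / Real.GammaSeq z.re n *
        Real.exp (s * (logOneAddSqDiv z.im z.re -
          logOneAddSqDiv z.im (z.re + (n + 1 : ℕ))) / 2) ≤
      ‖GammaSeq (z + s) n / GammaSeq z n‖ := by
  have hconv := ((convexOn_logOneAddSqDiv z.im).subset (Ici_subset_Ioi.2 hz)
    (convex_Ici _)).mul_sub_le_sum_range_sub_add hs0 hs1 (n + 1)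
  have hzs : 0 < (z + s).re := by simpa using add_pos_of_pos_of_nonneg hz hs0
  rw [norm_div, norm_GammaSeq hzs n, norm_GammaSeq hz n]
  simp only [add_re, ofReal_re, add_im, ofReal_im, add_zero]
  rw [mul_div_mul_comm, ← Real.exp_sub]
  refine mul_le_mul_of_nonneg_left (Real.exp_le_exp.2 ?_)
    (div_nonneg (Real.GammaSeq_nonneg (by positivity) n) (Real.GammaSeq_nonneg hz.le n))
  rw [sum_sub_distrib] at hconv
  linarith

theorem Real.Gamma_add_one_le_Gamma_add_mul_rpow {x s : ℝ} (hx : 0 < x) (hs0 : 0 ≤ s)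
    (hs1 : s ≤ 1) : Real.Gamma (x + 1) ≤ Real.Gamma (x + s) * (x + s) ^ (1 - s) := by
  have hxs : 0 < x + s := by positivity
  have hΓ : 0 < Real.Gamma (x + s) := Real.Gamma_pos_of_pos hxs
  have hlog := Real.convexOn_log_Gamma.2 (x := x + s) (y := x + s + 1) hxs
    (by positivity : 0 < x + s + 1) hs0 (sub_nonneg.2 hs1) (by ring)
  simp only [smul_eq_mul, Function.comp_apply] at hlog
  rw [show s * (x + s) + (1 - s) * (x + s + 1) = x + 1 by ring, Real.Gamma_add_one hxs.ne',
    Real.log_mul hxs.ne' hΓ.ne'] at hlog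
  rw [← Real.log_le_log_iff (Real.Gamma_pos_of_pos (by positivity)) (by positivity),
    Real.log_mul hΓ.ne' (by positivity), Real.log_rpow hxs]
  linarith

theorem Complex.Gamma_div_mul_rpow_le_norm_Gamma_add_div {z : ℂ} (hz : 0 < z.re) {s : ℝ}
    (hs0 : 0 ≤ s) (hs1 : s ≤ 1) :
    Real.Gamma (z.re + s) / Real.Gamma z.re * (‖z‖ / z.re) ^ s ≤
      ‖Gamma (z + s) / Gamma z‖ := by
  have hφ : Tendsto (fun n : ℕ => logOneAddSqDiv z.im (z.re + (n + 1 : ℕ))) atTop (𝓝 0) :=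
    (tendsto_logOneAddSqDiv_atTop z.im).comp <| tendsto_atTop_add_const_left _ _ <|
      tendsto_natCast_atTop_atTop.comp (tendsto_add_atTop_nat 1)
  have hreal := ((Real.GammaSeq_tendsto_Gamma (z.re + s)).div (Real.GammaSeq_tendsto_Gamma _)
    (Real.Gamma_pos_of_pos hz).ne').mul <| (Real.continuous_exp.tendsto _).comp <|
      (((tendsto_const_nhds (x := logOneAddSqDiv z.im z.re)).sub hφ).const_mul s).div_const 2
  have hcomplex := ((GammaSeq_tendsto_Gamma (z + s)).div (GammaSeq_tendsto_Gamma z)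
    (Gamma_ne_zero_of_re_pos hz)).norm
  have hratio : (‖z‖ / z.re) ^ s = Real.exp (s * (logOneAddSqDiv z.im z.re - 0) / 2) := by
    rw [norm_eq_re_mul_exp_logOneAddSqDiv hz, mul_div_cancel_left₀ _ hz.ne', ← Real.exp_mul]
    ring_nf
  rw [hratio]
  exact le_of_tendsto_of_tendsto' hreal hcomplex
    (GammaSeq_div_mul_exp_le_norm_GammaSeq_add_div hz hs0 hs1)

theorem Complex.norm_Gamma_div_Gamma_add_le {z : ℂ} (hz : 0 < z.re) {s : ℝ} (hs0 : 0 ≤ s)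
    (hs1 : s ≤ 1) :
    ‖Gamma z / Gamma (z + s)‖ ≤ ‖z‖ ^ (-s) * ((z.re + s) / z.re) ^ (1 - s) := by
  set x := z.re
  have hxs : 0 < x + s := by positivity
  have hnorm : 0 < ‖z‖ := norm_pos_iff.2 fun h => by simp [x, h] at hz
  have hreal : Real.Gamma x / Real.Gamma (x + s) ≤ (x + s) ^ (1 - s) / x := by
    have := Real.Gamma_add_one_le_Gamma_add_mul_rpow hz hs0 hs1
    rw [Real.Gamma_add_one hz.ne'] at this
    rw [div_le_div_iff₀ (Real.Gamma_pos_of_pos hxs) hz]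
    linarith
  calc ‖Gamma z / Gamma (z + s)‖ = ‖Gamma (z + s) / Gamma z‖⁻¹ := by rw [← norm_inv, inv_div]
    _ ≤ (Real.Gamma (x + s) / Real.Gamma x * (‖z‖ / x) ^ s)⁻¹ :=
        inv_anti₀ (by positivity) (Gamma_div_mul_rpow_le_norm_Gamma_add_div hz hs0 hs1)
    _ = Real.Gamma x / Real.Gamma (x + s) * (x / ‖z‖) ^ s := by
        rw [mul_inv, inv_div, ← Real.inv_rpow (by positivity), inv_div]
    _ ≤ (x + s) ^ (1 - s) / x * (x / ‖z‖) ^ s := by gcongr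
    _ = ‖z‖ ^ (-s) * ((x + s) / x) ^ (1 - s) := by
        rw [Real.div_rpow hz.le hnorm.le, Real.div_rpow hxs.le hz.le, Real.rpow_sub hz,
          Real.rpow_one, Real.rpow_neg hnorm.le]
        field_simp

theorem Complex.norm_Gamma_div_Gamma_le {a b : ℂ} {s : ℝ} (hb : 0 < b.re) (hs0 : 0 ≤ s)
    (hs1 : s ≤ 1) (ha : a ≠ 0) (hab : a + 1 = b + s) (hnorm : ‖a‖ ≤ ‖b‖) :
    ‖Gamma b / Gamma a‖ ≤ (b.re + s) / b.re * ‖b‖ ^ (1 - s) := by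
  have hbnorm : 0 < ‖b‖ := norm_pos_iff.2 fun h => by simp [h] at hb
  have hquot : Gamma b / Gamma a = a * (Gamma b / Gamma (b + s)) := by
    rw [← hab, Gamma_add_one a ha, ← mul_div_assoc, mul_div_mul_left _ _ ha]
  have hbase : 1 ≤ (b.re + s) / b.re := by rw [le_div_iff₀ hb]; linarith
  calc ‖Gamma b / Gamma a‖ = ‖a‖ * ‖Gamma b / Gamma (b + s)‖ := by rw [hquot, norm_mul]
    _ ≤ ‖b‖ * (‖b‖ ^ (-s) * ((b.re + s) / b.re) ^ (1 - s)) := by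
        gcongr
        exact norm_Gamma_div_Gamma_add_le hb hs0 hs1
    _ ≤ ‖b‖ * (‖b‖ ^ (-s) * ((b.re + s) / b.re) ^ (1 : ℝ)) := by
        gcongr
        linarith
    _ = (b.re + s) / b.re * ‖b‖ ^ (1 - s) := by
        rw [Real.rpow_one, Real.rpow_sub hbnorm, Real.rpow_one, Real.rpow_neg hbnorm.le]
        field_simp

/-- If `Re μ > -1/2`, `t ∈ ℝ`, `ε ∈ [-1/2, 1/2]` and `μ - ε + it ≠ 0`, then
`|Γ((μ+1+ε+it)/2) / Γ((μ-ε+it)/2)| ≤ ((Re μ + 3/2)/(Re μ + 1/2))² · |(μ+1+ε+it)/2|^(1/2+ε)`. -/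
theorem gamma_quotient_bound_large_re
    (μ : ℂ) (hμ : -(1/2 : ℝ) < μ.re)
    (t ε : ℝ) (hε₁ : -(1/2 : ℝ) ≤ ε) (hε₂ : ε ≤ 1/2)
    (hne : μ - (ε : ℂ) + (t : ℂ) * I ≠ 0) :
    ‖Complex.Gamma ((μ + 1 + (ε : ℂ) + (t : ℂ) * I) / 2) /
        Complex.Gamma ((μ - (ε : ℂ) + (t : ℂ) * I) / 2)‖ ≤
      ((μ.re + 3/2) / (μ.re + 1/2)) ^ 2 *
        ‖(μ + 1 + (ε : ℂ) + (t : ℂ) * I) / 2‖ ^ (1/2 + ε) := by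
  set a := (μ - (ε : ℂ) + (t : ℂ) * I) / 2
  set b := (μ + 1 + (ε : ℂ) + (t : ℂ) * I) / 2
  have hb : b.re = (μ.re + 1 + ε) / 2 := by simp [b]
  have hnorm : ‖a‖ ≤ ‖b‖ := by
    rw [← pow_le_pow_iff_left₀ (norm_nonneg a) (norm_nonneg b) two_ne_zero, Complex.sq_norm,
      Complex.sq_norm, normSq_apply, normSq_apply]
    simp only [a, b, div_ofNat_re, div_ofNat_im, add_re, sub_re, add_im, sub_im, one_re, one_im,
      ofReal_re, ofReal_im, mul_re, mul_im, I_re, I_im]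
    nlinarith [mul_nonneg (by linarith : 0 ≤ 2 * μ.re + 1) (by linarith : 0 ≤ 2 * ε + 1)]
  have hab : a + 1 = b + ((1/2 - ε : ℝ) : ℂ) := by
    simp only [a, b]
    push_cast
    ring
  have hratio : (b.re + (1/2 - ε)) / b.re ≤ ((μ.re + 3/2) / (μ.re + 1/2)) ^ 2 := by
    rw [hb, div_pow, div_le_div_iff₀ (by linarith) (pow_pos (by linarith) 2)]
    nlinarith
  calc _ ≤ (b.re + (1/2 - ε)) / b.re * ‖b‖ ^ (1 - (1/2 - ε)) :=
        norm_Gamma_div_Gamma_le (by linarith) (by linarith) (by linarith)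
          (div_ne_zero hne two_ne_zero) hab hnorm
    _ ≤ _ := by
        rw [show 1 - (1/2 - ε) = 1/2 + ε by ring]
        gcongr
end

section
/- Let u ∈ ℝ, η ∈ ℝ, λ ∈ (0,1), f ∈ ℕ with f ≥ 1, and μ_1,…,μ_f ∈ ℂ, and set g(s) = e^((u + iπfη/4)(1/2 − s)) ∏_{j=1}^f Γ(λs + μ_j). Let ρ ∈ ℂ be a pole of g of order n with polar coefficients c_1,…,c_n, i.e. the function s ↦ g(s+ρ) − ∑_{j=1}^n c_j s^(−j) extends holomorphically to a neighbourhood of 0. Assume Re(λρ + μ_j) ≤ 0 and |1 − λρ − μ_j| > λ for all j = 1,…,f, and that e^(u/λ) / ∏_{j=1}^f (|1 − λρ − μ_j| − λ) < 1/2. Suppose (R_l)_{l≥1} are complex numbers such that for each l ≥ 1 there is r_l > 0 with g holomorphic on the punctured disc 0 < |s − (ρ − l/λ)| ≤ r_l and R_l = (1/(2πi)) ∮_{|s − (ρ − l/λ)| = r_l} g(s) ds (the circle traversed once counterclockwise), so that R_l is the residue of g at ρ − l/λ. Then the series ∑_{l=1}^∞ R_l converges absolutely and |∑_{l=1}^∞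 R_l| < max_{1≤j≤n} |c_j|. -/
/-!
Iterating `Γ(z + 1) = z Γ(z)` gives, near `ρ`,
`g(w - l/λ) = g(w) · e^{Al/λ} ∏_{j ≤ f, 1 ≤ k ≤ l} (λ(w - ρ) - β_{jk})⁻¹` with
`A = u + iπfη/4` and `β_{jk} = k - λρ - μ_j`, so the residue of `g` at `ρ - l/λ` is
`e^{Al/λ} ∑_j c_j a_{j-1}`, where `a_m` are the Taylor coefficients at `ρ` of the product.
Since `Re(λρ + μ_j) ≤ 0` we have `|β_{jk}| ≥ |1 - λρ - μ_j| > λ`, so each factor is a geometric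
series in `w - ρ` converging absolutely on the closed unit disc, and the Cauchy product gives
`∑ |a_m| ≤ ∏_j (|1 - λρ - μ_j| - λ)^{-l}`. Hence `|R_l| ≤ max_j |c_j| · q^l` with `q < 1/2`, and
`∑_{l ≥ 1} q^l < 1`.
-/

open Complex Real

open Finset Metric Filter Topology

theorem Metric.eball_one {α : Type*} [PseudoMetricSpace α] (x : α) : eball x 1 = ball x 1 := by
  simpa using Metric.eball_coe (x := x) (ε := 1)

theorem circleIntegral.integral_comp_sub_right {E : Type*} [NormedAddCommGroup E] [NormedSpace ℂ E]
    (f : ℂ → E) (c d : ℂ) (R : ℝ) :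
    ∮ w in C(c, R), f (w - d) = ∮ z in C(c - d, R), f z := by
  have h : ∀ θ, circleMap c R θ - d = circleMap (c - d) R θ := fun θ => by
    simp only [circleMap]; ring
  simp only [circleIntegral, deriv_circleMap, h]

theorem circleIntegral_eq_of_differentiableAt_punctured {E : Type*} [NormedAddCommGroup E]
    [NormedSpace ℂ E] [CompleteSpace E] {f : ℂ → E} {c : ℂ} {r₁ r₂ : ℝ} (h₁ : 0 < r₁) (h₂ : 0 < r₂)
    (hf : ∀ z, z ≠ c → ‖z - c‖ ≤ max r₁ r₂ → DifferentiableAt ℂ f z) :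
    ∮ z in C(c, r₁), f z = ∮ z in C(c, r₂), f z := by
  wlog h : r₁ ≤ r₂ generalizing r₁ r₂
  · exact (this h₂ h₁ (by rwa [max_comm]) (le_of_not_ge h)).symm
  have hann : ∀ z ∈ closedBall c r₂ \ ball c r₁, DifferentiableAt ℂ f z := fun z ⟨hz₂, hz₁⟩ => by
    rw [mem_closedBall, dist_eq_norm] at hz₂
    refine hf z ?_ (hz₂.trans (le_max_right _ _))
    rintro rfl
    exact hz₁ (mem_ball_self h₁)
  refine (circleIntegral_eq_of_differentiable_on_annulus_off_countable h₁ h Set.countable_empty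
    (fun z hz => (hann z hz).continuousAt.continuousWithinAt) fun z hz => hann z ?_).symm
  exact ⟨ball_subset_closedBall hz.1.1, fun h' => hz.1.2 (ball_subset_closedBall h')⟩

theorem summable_norm_mul_pow_of_norm_le_one {𝕜 : Type*} [NormedDivisionRing 𝕜] {a : ℕ → 𝕜}
    (ha : Summable fun m => ‖a m‖) {v : 𝕜} (hv : ‖v‖ ≤ 1) : Summable fun m => ‖a m * v ^ m‖ :=
  ha.of_nonneg_of_le (fun _ => norm_nonneg _) fun m => by
    rw [norm_mul, norm_pow]
    exact mul_le_of_le_one_right (norm_nonneg _) (pow_le_one₀ (norm_nonneg v) hv)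

theorem tsum_norm_sum_antidiagonal_mul_le {R : Type*} [NormedRing R] {a b : ℕ → R}
    (ha : Summable fun m => ‖a m‖) (hb : Summable fun m => ‖b m‖) :
    ∑' m, ‖∑ p ∈ antidiagonal m, a p.1 * b p.2‖ ≤ (∑' m, ‖a m‖) * ∑' m, ‖b m‖ := by
  have ha' : Summable fun m => ‖‖a m‖‖ := by simpa only [norm_norm] using ha
  have hb' : Summable fun m => ‖‖b m‖‖ := by simpa only [norm_norm] using hb
  rw [tsum_mul_tsum_eq_tsum_sum_antidiagonal_of_summable_norm ha' hb']
  have h1 := summable_norm_sum_mul_antidiagonal_of_summable_norm ha hb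
  have h2 := summable_sum_mul_antidiagonal_of_summable_mul (summable_mul_of_summable_norm ha' hb')
  refine h1.tsum_le_tsum (fun m => ?_) h2
  exact (norm_sum_le _ _).trans (sum_le_sum fun p _ => norm_mul_le _ _)

structure HasUnitDiscExpansion (F : ℂ → ℂ) (a : ℕ → ℂ) : Prop where
  summable_norm : Summable fun m => ‖a m‖
  hasSum : ∀ v : ℂ, ‖v‖ ≤ 1 → HasSum (fun m => a m * v ^ m) (F v)

namespace HasUnitDiscExpansion

variable {F G : ℂ → ℂ} {a b : ℕ → ℂ}

theorem one : HasUnitDiscExpansion (fun _ => 1) (Pi.single 0 1) where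
  summable_norm := summable_of_ne_finset_zero (s := {0}) fun m hm => by
    simp [Finset.mem_singleton.not.mp hm]
  hasSum v _ := by
    convert hasSum_pi_single 0 (1 : ℂ) using 1
    ext m
    rcases eq_or_ne m 0 with rfl | hm <;> simp [*]

theorem tsum_norm_one : ∑' m, ‖(Pi.single 0 1 : ℕ → ℂ) m‖ = 1 := by
  rw [tsum_eq_single 0 fun m hm => by simp [hm]]
  simp

theorem mul (hF : HasUnitDiscExpansion F a) (hG : HasUnitDiscExpansion G b) :
    HasUnitDiscExpansion (fun v => F v * G v) fun m => ∑ p ∈ antidiagonal m, a p.1 * b p.2 where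
  summable_norm :=
    summable_norm_sum_mul_antidiagonal_of_summable_norm hF.summable_norm hG.summable_norm
  hasSum v hv := by
    have ha := summable_norm_mul_pow_of_norm_le_one hF.summable_norm hv
    have hb := summable_norm_mul_pow_of_norm_le_one hG.summable_norm hv
    have hterm : ∀ m, ∑ p ∈ antidiagonal m, (a p.1 * v ^ p.1) * (b p.2 * v ^ p.2) =
        (∑ p ∈ antidiagonal m, a p.1 * b p.2) * v ^ m := fun m => by
      rw [sum_mul]
      refine sum_congr rfl fun p hp => ?_
      rw [← mem_antidiagonal.mp hp, pow_add]
      ring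
    have := (summable_norm_sum_mul_antidiagonal_of_summable_norm ha hb).of_norm.hasSum
    rw [← tsum_mul_tsum_eq_tsum_sum_antidiagonal_of_summable_norm ha hb,
      (hF.hasSum v hv).tsum_eq, (hG.hasSum v hv).tsum_eq] at this
    simpa only [hterm] using this

theorem inv_sub {lam β : ℂ} (h : ‖lam‖ < ‖β‖) :
    HasUnitDiscExpansion (fun v => (lam * v - β)⁻¹) fun m => -β⁻¹ * (lam / β) ^ m where
  summable_norm := by
    have hq : ‖lam / β‖ < 1 := by
      rw [norm_div]; exact (div_lt_one ((norm_nonneg _).trans_lt h)).mpr h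
    simpa [norm_pow] using (summable_geometric_of_lt_one (norm_nonneg _) hq).mul_left ‖β‖⁻¹
  hasSum v hv := by
    have hβ : β ≠ 0 := norm_pos_iff.mp ((norm_nonneg _).trans_lt h)
    have hq : ‖lam * v / β‖ < 1 := by
      rw [norm_div, norm_mul, div_lt_one ((norm_nonneg _).trans_lt h)]
      exact (mul_le_of_le_one_right (norm_nonneg _) hv).trans_lt h
    have hval : (lam * v - β)⁻¹ = -β⁻¹ * (1 - lam * v / β)⁻¹ := by
      field_simp
      rw [← neg_sub, div_neg]
    rw [hval]
    refine ((hasSum_geometric_of_norm_lt_one hq).mul_left (-β⁻¹)).congr_fun fun m => ?_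
    rw [div_pow, div_pow, mul_pow]
    ring

theorem tsum_norm_inv_sub {lam β : ℂ} (h : ‖lam‖ < ‖β‖) :
    ∑' m, ‖-β⁻¹ * (lam / β) ^ m‖ = (‖β‖ - ‖lam‖)⁻¹ := by
  have hβ : 0 < ‖β‖ := (norm_nonneg _).trans_lt h
  have hq : ‖lam‖ / ‖β‖ < 1 := (div_lt_one hβ).mpr h
  simp only [norm_mul, norm_neg, norm_inv, norm_pow, norm_div]
  rw [tsum_mul_left, tsum_geometric_of_lt_one (by positivity) hq]
  field_simp

theorem exists_prod {ι : Type*} (s : Finset ι) {F : ι → ℂ → ℂ} {a : ι → ℕ → ℂ}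
    (h : ∀ i ∈ s, HasUnitDiscExpansion (F i) (a i)) :
    ∃ b, HasUnitDiscExpansion (fun v => ∏ i ∈ s, F i v) b ∧
      ∑' m, ‖b m‖ ≤ ∏ i ∈ s, ∑' m, ‖a i m‖ := by
  classical
  induction s using Finset.cons_induction with
  | empty => exact ⟨_, by simpa using one, by simp [tsum_norm_one]⟩
  | cons i s hi ih =>
    obtain ⟨b, hb, hbs⟩ := ih fun j hj => h j (mem_cons_of_mem hj)
    have hi' := h i (mem_cons_self i s)
    refine ⟨_, by simpa only [prod_cons] using hi'.mul hb, ?_⟩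
    rw [prod_cons]
    exact (tsum_norm_sum_antidiagonal_mul_le hi'.summable_norm hb.summable_norm).trans
      (mul_le_mul_of_nonneg_left hbs (tsum_nonneg fun _ => norm_nonneg _))

theorem hasFPowerSeriesOnBall (hF : HasUnitDiscExpansion F a) :
    HasFPowerSeriesOnBall F (FormalMultilinearSeries.ofScalars ℂ a) 0 1 where
  r_le := FormalMultilinearSeries.le_radius_of_summable_norm _ <| by
    simpa [FormalMultilinearSeries.ofScalars_norm] using hF.summable_norm
  r_pos := one_pos
  hasSum {y} hy := by
    rw [eball_one, mem_ball_zero_iff] at hy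
    simpa [FormalMultilinearSeries.ofScalars_apply_eq, mul_comm] using hF.hasSum y hy.le

theorem differentiableAt (hF : HasUnitDiscExpansion F a) {v : ℂ} (hv : ‖v‖ < 1) :
    DifferentiableAt ℂ F v :=
  (hF.hasFPowerSeriesOnBall.analyticAt_of_mem (by simpa [eball_one] using hv)).differentiableAt

theorem differentiableOn_comp_sub (hF : HasUnitDiscExpansion F a) (c : ℂ) {r : ℝ} (hr : r < 1) :
    DifferentiableOn ℂ (fun w => F (w - c)) (closedBall c r) := fun w hw =>
  ((hF.differentiableAt (v := w - c) (by rw [mem_closedBall, dist_eq_norm] at hw; linarith)).comp w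
    (differentiableAt_id.sub_const c)).differentiableWithinAt

theorem circleIntegral_sub_zpow_mul (hF : HasUnitDiscExpansion F a) (c : ℂ) {r : ℝ}
    (hr₀ : 0 < r) (hr₁ : r < 1) {j : ℕ} (hj : 1 ≤ j) :
    ∮ w in C(c, r), (w - c) ^ (-(j : ℤ)) * F (w - c) = 2 * π * I * a (j - 1) := by
  have hp : HasFPowerSeriesOnBall (fun w => F (w - c))
      (FormalMultilinearSeries.ofScalars ℂ a) c 1 := by
    simpa using hF.hasFPowerSeriesOnBall.comp_sub c
  have hr : (r.toNNReal : ℝ) = r := Real.coe_toNNReal r hr₀.le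
  have hcauchy := (hr ▸ hF.differentiableOn_comp_sub c hr₁).hasFPowerSeriesOnBall
    (Real.toNNReal_pos.mpr hr₀)
  rw [hr] at hcauchy
  have hcoeff := congrArg (·.coeff (j - 1))
    (hp.hasFPowerSeriesAt.eq_formalMultilinearSeries hcauchy.hasFPowerSeriesAt)
  rw [FormalMultilinearSeries.coeff_ofScalars] at hcoeff
  simp only [FormalMultilinearSeries.coeff, cauchyPowerSeries,
    ContinuousMultilinearMap.mkPiRing_apply, Pi.one_apply, prod_const_one, one_mul,
    smul_eq_mul] at hcoeff
  have hint : ∀ w : ℂ, (w - c) ^ (-(j : ℤ)) * F (w - c) =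
      (w - c)⁻¹ ^ (j - 1) * ((w - c)⁻¹ * F (w - c)) := fun w => by
    rw [zpow_neg, zpow_natCast, ← inv_pow, ← mul_assoc, ← pow_succ, Nat.sub_add_cancel hj]
  simp only [hint]
  rw [hcoeff, mul_inv_cancel_left₀ two_pi_I_ne_zero]

theorem circleIntegral_laurent_mul (hF : HasUnitDiscExpansion F a) {c : ℂ} {r : ℝ}
    (hr₀ : 0 < r) (hr₁ : r < 1) {H : ℂ → ℂ} (hH : DifferentiableOn ℂ H (closedBall c r))
    (n : ℕ) (b : ℕ → ℂ) :
    ∮ w in C(c, r), ((∑ j ∈ Icc 1 n, b j * (w - c) ^ (-(j : ℤ))) + H w) * F (w - c) =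
      2 * π * I * ∑ j ∈ Icc 1 n, b j * a (j - 1) := by
  have hFc := hF.differentiableOn_comp_sub c hr₁
  have hpole : ∀ j ∈ Icc 1 n,
      CircleIntegrable (fun w => b j * ((w - c) ^ (-(j : ℤ)) * F (w - c))) c r :=
    fun j _ => ContinuousOn.circleIntegrable hr₀.le <| continuousOn_const.mul <|
      ((continuousOn_id.sub continuousOn_const).zpow₀ _ fun w hw =>
        .inl (sub_ne_zero.mpr (ne_of_mem_sphere hw hr₀.ne'))).mul
      (hFc.continuousOn.mono sphere_subset_closedBall)
  have hHF : DifferentiableOn ℂ (fun w => H w * F (w - c)) (closedBall c r) := hH.mul hFc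
  have hreg : CircleIntegrable (fun w => H w * F (w - c)) c r :=
    ContinuousOn.circleIntegrable hr₀.le (hHF.continuousOn.mono sphere_subset_closedBall)
  have hsplit : ∀ w, ((∑ j ∈ Icc 1 n, b j * (w - c) ^ (-(j : ℤ))) + H w) * F (w - c) =
      (∑ j ∈ Icc 1 n, b j * ((w - c) ^ (-(j : ℤ)) * F (w - c))) + H w * F (w - c) := fun w => by
    simp only [add_mul, sum_mul, mul_assoc]
  simp only [hsplit]
  rw [circleIntegral.integral_add (CircleIntegrable.fun_sum _ hpole) hreg,
    circleIntegral.integral_fun_sum hpole,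
    circleIntegral_eq_zero_of_differentiable_on_off_countable hr₀.le Set.countable_empty
      hHF.continuousOn fun w hw => ?_, add_zero, mul_sum]
  · refine sum_congr rfl fun j hj => ?_
    rw [circleIntegral.integral_const_mul,
      hF.circleIntegral_sub_zpow_mul c hr₀ hr₁ (mem_Icc.mp hj).1]
    ring
  · exact hHF.differentiableAt (closedBall_mem_nhds_of_mem hw.1)

end HasUnitDiscExpansion

theorem exists_ball_eq_add_of_eventually {g h P : ℂ → ℂ} {ρ : ℂ} (hh : AnalyticAt ℂ h 0)
    (hgP : ∀ᶠ s in 𝓝[≠] 0, g (s + ρ) = P s + h s) :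
    ∃ δ, 0 < δ ∧ δ ≤ 1 ∧ ∀ w, ‖w - ρ‖ < δ →
      AnalyticAt ℂ h (w - ρ) ∧ (w ≠ ρ → g w = P (w - ρ) + h (w - ρ)) := by
  obtain ⟨δ₀, hδ₀, h₀⟩ := Metric.eventually_nhds_iff.mp (eventually_nhdsWithin_iff.mp hgP)
  obtain ⟨δ₁, hδ₁, h₁⟩ := Metric.eventually_nhds_iff.mp hh.eventually_analyticAt
  refine ⟨min (min δ₀ δ₁) 1, by positivity, min_le_right _ _, fun w hw => ⟨h₁ ?_, fun hne => ?_⟩⟩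
  · rw [dist_zero_right]
    exact hw.trans_le ((min_le_left _ _).trans (min_le_right _ _))
  · have hwδ₀ : dist (w - ρ) 0 < δ₀ := by
      rw [dist_zero_right]
      exact hw.trans_le ((min_le_left _ _).trans (min_le_left _ _))
    simpa using h₀ hwδ₀ (sub_ne_zero.mpr hne)

theorem differentiableAt_of_forall_eq_laurent {g h : ℂ → ℂ} {c : ℕ → ℂ} {ρ w : ℂ} {n : ℕ}
    {δ : ℝ} (hloc : ∀ y, ‖y - ρ‖ < δ → AnalyticAt ℂ h (y - ρ) ∧
      (y ≠ ρ → g y = (∑ j ∈ Icc 1 n, c j * (y - ρ) ^ (-(j : ℤ))) + h (y - ρ)))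
    (hw : w ≠ ρ) (hwδ : ‖w - ρ‖ < δ) : DifferentiableAt ℂ g w := by
  have hU : {y | y ≠ ρ} ∩ ball ρ δ ∈ 𝓝 w :=
    (isOpen_ne.inter isOpen_ball).mem_nhds ⟨hw, mem_ball_iff_norm.mpr hwδ⟩
  have hsub : DifferentiableAt ℂ (fun y => y - ρ) w := by fun_prop
  refine DifferentiableAt.congr_of_eventuallyEq ?_
    (eventually_of_mem hU fun y hy => (hloc y (mem_ball_iff_norm.mp hy.2)).2 hy.1)
  refine (DifferentiableAt.fun_sum fun j _ => ?_).add ((hloc w hwδ).1.differentiableAt.comp w hsub)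
  exact ((differentiableAt_zpow.mpr (.inl (sub_ne_zero.mpr hw))).comp w hsub).const_mul _

theorem differentiableAt_of_eq_mul_shift {g F : ℂ → ℂ} {a : ℕ → ℂ} {ρ d ε z : ℂ}
    (hF : HasUnitDiscExpansion F a) (hshift : ∀ w, ‖w - ρ‖ < 1 → g (w - d) = g w * (ε * F (w - ρ)))
    (hz : ‖z + d - ρ‖ < 1) (hg : DifferentiableAt ℂ g (z + d)) : DifferentiableAt ℂ g z := by
  have hU : {y | ‖y + d - ρ‖ < 1} ∈ 𝓝 z := (isOpen_lt (by fun_prop) continuous_const).mem_nhds hz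
  have hadd : DifferentiableAt ℂ (fun y => y + d) z := by fun_prop
  have hadd' : DifferentiableAt ℂ (fun y => y + d - ρ) z := by fun_prop
  refine DifferentiableAt.congr_of_eventuallyEq (f := fun y => g (y + d) * (ε * F (y + d - ρ)))
    ((hg.comp z hadd).mul (((hF.differentiableAt hz).comp z hadd').const_mul ε))
    (eventually_of_mem hU fun y hy => ?_)
  simpa using hshift (y + d) hy

theorem residue_eq_of_eq_mul_shift {g F h : ℂ → ℂ} {a c : ℕ → ℂ} {ρ d ε : ℂ} {n : ℕ} {r : ℝ}
    (hF : HasUnitDiscExpansion F a) (hh : AnalyticAt ℂ h 0)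
    (hpolar : ∀ᶠ s in 𝓝[≠] 0, g (s + ρ) = (∑ j ∈ Icc 1 n, c j * s ^ (-(j : ℤ))) + h s)
    (hshift : ∀ w, ‖w - ρ‖ < 1 → g (w - d) = g w * (ε * F (w - ρ)))
    (hr : 0 < r) (hgr : ∀ z, z ≠ ρ - d → ‖z - (ρ - d)‖ ≤ r → DifferentiableAt ℂ g z) :
    (2 * π * I)⁻¹ * ∮ z in C(ρ - d, r), g z = ε * ∑ j ∈ Icc 1 n, c j * a (j - 1) := by
  obtain ⟨δ, hδ, hδ₁, hloc⟩ := exists_ball_eq_add_of_eventually hh hpolar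
  have hr' : 0 < δ / 2 := by positivity
  have hgd : ∀ z, z ≠ ρ - d → ‖z - (ρ - d)‖ ≤ max r (δ / 2) → DifferentiableAt ℂ g z := by
    intro z hz hzr
    rcases le_or_gt ‖z - (ρ - d)‖ r with hzr' | hzr'
    · exact hgr z hz hzr'
    have hzδ : ‖z + d - ρ‖ < δ := by
      rw [show z + d - ρ = z - (ρ - d) by ring]
      exact ((le_max_iff.mp hzr).resolve_left hzr'.not_ge).trans_lt (by linarith)
    refine differentiableAt_of_eq_mul_shift hF hshift (by linarith)
      (differentiableAt_of_forall_eq_laurent hloc (fun hzρ => hz ?_) hzδ)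
    rw [← hzρ]
    ring
  have hH : DifferentiableOn ℂ (fun w => h (w - ρ)) (closedBall ρ (δ / 2)) := fun w hw =>
    ((hloc w (by rw [mem_closedBall, dist_eq_norm] at hw; linarith)).1.differentiableAt.comp w
      (by fun_prop)).differentiableWithinAt
  have hsphere : Set.EqOn (fun w => g (w - d))
      (fun w => ε * (((∑ j ∈ Icc 1 n, c j * (w - ρ) ^ (-(j : ℤ))) + h (w - ρ)) * F (w - ρ)))
      (sphere ρ (δ / 2)) := fun w hw => by
    have hwρ := ne_of_mem_sphere hw hr'.ne'
    rw [mem_sphere_iff_norm] at hw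
    simp only [hshift w (by linarith), (hloc w (by linarith)).2 hwρ]
    ring
  rw [circleIntegral_eq_of_differentiableAt_punctured hr hr' hgd,
    ← circleIntegral.integral_comp_sub_right, circleIntegral.integral_congr hr'.le hsphere,
    circleIntegral.integral_const_mul, hF.circleIntegral_laurent_mul hr' (by linarith) hH,
    mul_left_comm, inv_mul_cancel_left₀ two_pi_I_ne_zero]

theorem Complex.Gamma_sub_natCast_mul_prod (z : ℂ) (l : ℕ) (hz : ∀ k ∈ Icc 1 l, z - k ≠ 0) :
    Gamma (z - l) * ∏ k ∈ Icc 1 l, (z - k) = Gamma z := by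
  induction l with
  | zero => simp
  | succ l ih =>
    have hl : z - (l + 1 : ℕ) ≠ 0 := hz (l + 1) (right_mem_Icc.mpr (Nat.le_add_left 1 l))
    rw [prod_Icc_succ_top (Nat.le_add_left 1 l), ← mul_assoc, mul_right_comm, mul_comm _ (z - _),
      ← Gamma_add_one _ hl, ← ih fun k hk => hz k (Icc_subset_Icc_right (Nat.le_succ l) hk)]
    push_cast
    ring_nf

noncomputable def gammaProd {f : ℕ} (A lam : ℂ) (μ : Fin f → ℂ) (s : ℂ) : ℂ :=
  exp (A * (1 / 2 - s)) * ∏ j, Gamma (lam * s + μ j)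

theorem gammaProd_sub_natCast_div {f : ℕ} {A lam : ℂ} {μ : Fin f → ℂ} (hlam : lam ≠ 0) (l : ℕ)
    {w : ℂ} (hw : ∀ j, ∀ k ∈ Icc 1 l, lam * w + μ j - k ≠ 0) :
    gammaProd A lam μ (w - l / lam) =
      gammaProd A lam μ w * (exp (A * l / lam) * ∏ j, ∏ k ∈ Icc 1 l, (lam * w + μ j - k)⁻¹) := by
  have hΓ : ∀ j, Gamma (lam * (w - l / lam) + μ j) =
      Gamma (lam * w + μ j) * ∏ k ∈ Icc 1 l, (lam * w + μ j - k)⁻¹ := fun j => by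
    rw [← Gamma_sub_natCast_mul_prod _ l (hw j), prod_inv_distrib, mul_inv_cancel_right₀
      (prod_ne_zero_iff.mpr (hw j))]
    congr 1
    field_simp
    ring
  have hexp : exp (A * (1 / 2 - (w - l / lam))) = exp (A * (1 / 2 - w)) * exp (A * l / lam) := by
    rw [← Complex.exp_add]
    ring_nf
  simp only [gammaProd, hΓ, hexp, prod_mul_distrib]
  ring

theorem gammaProd_sub_natCast_div_eq_mul_prod {f : ℕ} {A : ℂ} {lam : ℝ} {μ : Fin f → ℂ} {ρ w : ℂ}
    (hlam : 0 < lam) (l : ℕ)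
    (hβ : ∀ i ∈ (univ : Finset (Fin f)) ×ˢ Icc 1 l, ‖(lam : ℂ)‖ < ‖(i.2 : ℂ) - lam * ρ - μ i.1‖)
    (hw : ‖w - ρ‖ < 1) :
    gammaProd A lam μ (w - l / lam) = gammaProd A lam μ w * (exp (A * l / lam) *
      ∏ i ∈ (univ : Finset (Fin f)) ×ˢ Icc 1 l, (lam * (w - ρ) - (i.2 - lam * ρ - μ i.1))⁻¹) := by
  have hne : ∀ j, ∀ k ∈ Icc 1 l, (lam : ℂ) * w + μ j - k ≠ 0 := fun j k hk => by
    rw [show (lam : ℂ) * w + μ j - k = lam * (w - ρ) - (k - lam * ρ - μ j) by ring]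
    refine sub_ne_zero.mpr fun heq => (hβ (j, k) (mem_product.mpr ⟨mem_univ j, hk⟩)).not_ge ?_
    rw [← heq, norm_mul]
    exact mul_le_of_le_one_right (norm_nonneg _) hw.le
  rw [gammaProd_sub_natCast_div (ofReal_ne_zero.mpr hlam.ne') l hne, prod_product]
  congr 2
  exact prod_congr rfl fun j _ => prod_congr rfl fun k _ => by ring_nf

theorem norm_one_sub_le_norm_natCast_sub {z : ℂ} (hz : z.re ≤ 0) {k : ℕ} (hk : 1 ≤ k) :
    ‖1 - z‖ ≤ ‖(k : ℂ) - z‖ := by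
  have hk' : (1 : ℝ) ≤ k := by exact_mod_cast hk
  rw [norm_def, norm_def]
  gcongr
  simp only [normSq_apply, sub_re, sub_im, one_re, one_im, natCast_re, natCast_im]
  nlinarith

theorem norm_sum_Icc_mul_le {n : ℕ} (hn : 1 ≤ n) (c : ℕ → ℂ) {a : ℕ → ℂ}
    (ha : Summable fun m => ‖a m‖) :
    ‖∑ j ∈ Icc 1 n, c j * a (j - 1)‖ ≤
      (Icc 1 n).sup' (nonempty_Icc.mpr hn) (fun j => ‖c j‖) * ∑' m, ‖a m‖ := by
  have hinj : Set.InjOn (· - 1) (Icc 1 n : Set ℕ) := fun x hx y hy hxy => by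
    simp only [coe_Icc, Set.mem_Icc] at hx hy hxy
    omega
  calc ‖∑ j ∈ Icc 1 n, c j * a (j - 1)‖
      ≤ ∑ j ∈ Icc 1 n, (Icc 1 n).sup' (nonempty_Icc.mpr hn) (fun j => ‖c j‖) * ‖a (j - 1)‖ :=
        (norm_sum_le _ _).trans <| sum_le_sum fun j hj => by
          rw [norm_mul]
          exact mul_le_mul_of_nonneg_right (le_sup' (fun j => ‖c j‖) hj) (norm_nonneg _)
    _ = (Icc 1 n).sup' (nonempty_Icc.mpr hn) (fun j => ‖c j‖) *
          ∑ m ∈ (Icc 1 n).image (· - 1), ‖a m‖ := by rw [sum_image hinj, mul_sum]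
    _ ≤ _ := by
        gcongr
        · exact (norm_nonneg _).trans (le_sup' (fun j => ‖c j‖) (left_mem_Icc.mpr hn))
        · exact ha.sum_le_tsum _ fun m _ => norm_nonneg _

theorem prod_product_Icc_inv_le {ι : Type*} [Fintype ι] {l : ℕ} {x : ι × ℕ → ℝ} {y : ι → ℝ}
    (hy : ∀ j, 0 < y j) (hxy : ∀ i ∈ (univ : Finset ι) ×ˢ Icc 1 l, y i.1 ≤ x i) :
    ∏ i ∈ (univ : Finset ι) ×ˢ Icc 1 l, (x i)⁻¹ ≤ (∏ j, y j)⁻¹ ^ l :=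
  calc ∏ i ∈ (univ : Finset ι) ×ˢ Icc 1 l, (x i)⁻¹
      ≤ ∏ i ∈ (univ : Finset ι) ×ˢ Icc 1 l, (y i.1)⁻¹ :=
        prod_le_prod (fun i hi => inv_nonneg.mpr ((hy i.1).le.trans (hxy i hi)))
          fun i hi => inv_anti₀ (hy i.1) (hxy i hi)
    _ = _ := by simp [prod_product, prod_pow, prod_inv_distrib]

theorem norm_residue_gammaProd_le {f : ℕ} {A : ℂ} {lam : ℝ} {μ : Fin f → ℂ} {ρ : ℂ} {n : ℕ}
    (hn : 1 ≤ n) {c : ℕ → ℂ} {h : ℂ → ℂ} (hlam : 0 < lam) (hh : AnalyticAt ℂ h 0)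
    (hpolar : ∀ᶠ s in 𝓝[≠] 0,
      gammaProd A lam μ (s + ρ) = (∑ j ∈ Icc 1 n, c j * s ^ (-(j : ℤ))) + h s)
    (hρre : ∀ j, ((lam : ℂ) * ρ + μ j).re ≤ 0) (hρabs : ∀ j, lam < ‖1 - (lam : ℂ) * ρ - μ j‖)
    (l : ℕ) {r : ℝ} (hr : 0 < r)
    (hgr : ∀ s, s ≠ ρ - l / lam → ‖s - (ρ - l / lam)‖ ≤ r →
      DifferentiableAt ℂ (gammaProd A lam μ) s) :
    ‖(2 * π * I)⁻¹ * ∮ s in C(ρ - l / lam, r), gammaProd A lam μ s‖ ≤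
      (Icc 1 n).sup' (nonempty_Icc.mpr hn) (fun j => ‖c j‖) *
        (Real.exp (A.re / lam) / ∏ j, (‖1 - (lam : ℂ) * ρ - μ j‖ - lam)) ^ l := by
  set S : Finset (Fin f × ℕ) := univ ×ˢ Icc 1 l
  set β : Fin f × ℕ → ℂ := fun i => i.2 - lam * ρ - μ i.1
  have hnorm_lam : ‖(lam : ℂ)‖ = lam := by simp [hlam.le]
  have hβ : ∀ i ∈ S, ‖1 - (lam : ℂ) * ρ - μ i.1‖ ≤ ‖β i‖ := fun i hi => by
    have := norm_one_sub_le_norm_natCast_sub (hρre i.1) (mem_Icc.mp (mem_product.mp hi).2).1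
    simpa only [β, sub_add_eq_sub_sub] using this
  have hβlam : ∀ i ∈ S, ‖(lam : ℂ)‖ < ‖β i‖ := fun i hi => by
    rw [hnorm_lam]
    exact (hρabs i.1).trans_le (hβ i hi)
  obtain ⟨a, ha, hsum⟩ := HasUnitDiscExpansion.exists_prod S fun i hi =>
    HasUnitDiscExpansion.inv_sub (hβlam i hi)
  have hprod : ∏ i ∈ S, ∑' m, ‖-(β i)⁻¹ * (lam / β i) ^ m‖ ≤
      (∏ j, (‖1 - (lam : ℂ) * ρ - μ j‖ - lam))⁻¹ ^ l := by
    rw [prod_congr rfl fun i hi => HasUnitDiscExpansion.tsum_norm_inv_sub (hβlam i hi)]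
    exact prod_product_Icc_inv_le (fun j => sub_pos.mpr (hρabs j)) fun i hi => by
      rw [hnorm_lam]
      linarith [hβ i hi]
  have hexp : ‖exp (A * l / lam)‖ = Real.exp (A.re / lam) ^ l := by
    rw [norm_exp, ← Real.exp_nat_mul]
    congr 1
    simp only [div_ofReal_re, mul_re, natCast_re, natCast_im, mul_zero, sub_zero]
    ring
  have hC : 0 ≤ (Icc 1 n).sup' (nonempty_Icc.mpr hn) (fun j => ‖c j‖) :=
    (norm_nonneg _).trans (le_sup' (fun j => ‖c j‖) (left_mem_Icc.mpr hn))
  rw [residue_eq_of_eq_mul_shift ha hh hpolar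
    (fun w hw => gammaProd_sub_natCast_div_eq_mul_prod hlam l hβlam hw) hr hgr, norm_mul, hexp]
  calc _ ≤ Real.exp (A.re / lam) ^ l * ((Icc 1 n).sup' (nonempty_Icc.mpr hn) (fun j => ‖c j‖) *
        (∏ j, (‖1 - (lam : ℂ) * ρ - μ j‖ - lam))⁻¹ ^ l) := by
        gcongr
        exact (norm_sum_Icc_mul_le hn c ha.summable_norm).trans (by gcongr; exact hsum.trans hprod)
    _ = _ := by rw [div_pow, inv_pow]; ring

theorem summable_and_norm_tsum_lt_of_norm_le_geometric {E : Type*} [NormedAddCommGroup E]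
    {R : ℕ → E} {C q : ℝ} (hC : 0 < C) (hq₀ : 0 ≤ q) (hq : q < 1 / 2)
    (hR : ∀ l, ‖R (l + 1)‖ ≤ C * q ^ (l + 1)) :
    (Summable fun l => ‖R (l + 1)‖) ∧ ‖∑' l, R (l + 1)‖ < C := by
  have hgeom : HasSum (fun l => C * q ^ (l + 1)) (C * q * (1 - q)⁻¹) := by
    simpa only [pow_succ, mul_comm _ q, ← mul_assoc] using
      (hasSum_geometric_of_lt_one hq₀ (by linarith)).mul_left (C * q)
  have hs : Summable fun l => ‖R (l + 1)‖ :=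
    hgeom.summable.of_nonneg_of_le (fun _ => norm_nonneg _) hR
  refine ⟨hs, (norm_tsum_le_tsum_norm hs).trans_lt ((hasSum_le hR hs.hasSum hgeom).trans_lt ?_)⟩
  rw [← div_eq_mul_inv, div_lt_iff₀ (by linarith)]
  nlinarith

theorem residue_tail_bound_general
    (u η : ℝ) (lam : ℝ) (hlam₁ : 0 < lam)
    (f : ℕ) (μ : Fin f → ℂ)
    (g : ℂ → ℂ)
    (hg : ∀ s, g s = Complex.exp (((u : ℂ) + I * (π : ℂ) * f * η / 4) * (1/2 - s)) *
      ∏ j, Complex.Gamma ((lam : ℂ) * s + μ j))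
    (ρ : ℂ) (n : ℕ) (hn : 1 ≤ n)
    (c : ℕ → ℂ) (hcn : c n ≠ 0)
    (hpolar : ∃ h : ℂ → ℂ, AnalyticAt ℂ h 0 ∧
      ∀ᶠ s in nhdsWithin (0 : ℂ) {0}ᶜ,
        g (s + ρ) = (∑ j ∈ Finset.Icc 1 n, c j * s ^ (-(j : ℤ))) + h s)
    (hρre : ∀ j, ((lam : ℂ) * ρ + μ j).re ≤ 0)
    (hρabs : ∀ j, lam < ‖1 - (lam : ℂ) * ρ - μ j‖)
    (hsmall : Real.exp (u / lam) / (∏ j, (‖1 - (lam : ℂ) * ρ - μ j‖ - lam)) < 1/2)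
    (R : ℕ → ℂ) (rr : ℕ → ℝ)
    (hR : ∀ l : ℕ, 1 ≤ l → 0 < rr l ∧
      (∀ s : ℂ, s ≠ ρ - (l : ℂ) / (lam : ℂ) →
        ‖s - (ρ - (l : ℂ) / (lam : ℂ))‖ ≤ rr l → DifferentiableAt ℂ g s) ∧
      R l = (2 * (π : ℂ) * I)⁻¹ * ∮ s in C(ρ - (l : ℂ) / (lam : ℂ), rr l), g s) :
    (Summable fun l : ℕ => ‖R (l + 1)‖) ∧
      ‖∑' l : ℕ, R (l + 1)‖ <
        (Finset.Icc 1 n).sup' (Finset.nonempty_Icc.mpr hn) fun j => ‖c j‖ := by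
  obtain ⟨h, hh, hpolar⟩ := hpolar
  obtain rfl : g = gammaProd ((u : ℂ) + I * π * f * η / 4) lam μ := funext hg
  have hC : 0 < (Icc 1 n).sup' (nonempty_Icc.mpr hn) fun j => ‖c j‖ :=
    (norm_pos_iff.mpr hcn).trans_le (le_sup' (fun j => ‖c j‖) (right_mem_Icc.mpr hn))
  have hq₀ : 0 ≤ Real.exp (u / lam) / ∏ j, (‖1 - (lam : ℂ) * ρ - μ j‖ - lam) :=
    div_nonneg (Real.exp_pos _).le (prod_nonneg fun j _ => (sub_pos.mpr (hρabs j)).le)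
  refine summable_and_norm_tsum_lt_of_norm_le_geometric hC hq₀ hsmall fun l => ?_
  obtain ⟨hr, hgr, hRl⟩ := hR (l + 1) (Nat.le_add_left 1 l)
  have hA : ((u : ℂ) + I * π * f * η / 4).re = u := by simp
  simpa only [hRl, hA] using norm_residue_gammaProd_le hn hlam₁ hh hpolar hρre hρabs (l + 1) hr hgr

/-- Lemma 7 (tails of residues): if `ρ` is a pole of
`g(s) = e^{(u+iπfη/4)(1/2-s)} ∏_{j=1}^f Γ(λs+μ_j)` of order `n` with polar
coefficients `c_1,…,c_n`, and the stated smallness conditions hold, then the sum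
of the residues `R_l` of `g` at `ρ - l/λ`, `l ≥ 1`, converges absolutely and is
bounded in modulus by `max_j |c_j|`. -/
theorem residue_tail_bound
    (u η : ℝ) (lam : ℝ) (hlam₁ : 0 < lam) (hlam₂ : lam < 1)
    (f : ℕ) (hf : 1 ≤ f) (μ : Fin f → ℂ)
    (g : ℂ → ℂ)
    (hg : ∀ s, g s = Complex.exp (((u : ℂ) + I * (π : ℂ) * f * η / 4) * (1/2 - s)) *
      ∏ j, Complex.Gamma ((lam : ℂ) * s + μ j))
    (ρ : ℂ) (n : ℕ) (hn : 1 ≤ n)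
    (c : ℕ → ℂ) (hcn : c n ≠ 0)
    (hpolar : ∃ h : ℂ → ℂ, AnalyticAt ℂ h 0 ∧
      ∀ᶠ s in nhdsWithin (0 : ℂ) {0}ᶜ,
        g (s + ρ) = (∑ j ∈ Finset.Icc 1 n, c j * s ^ (-(j : ℤ))) + h s)
    (hρre : ∀ j, ((lam : ℂ) * ρ + μ j).re ≤ 0)
    (hρabs : ∀ j, lam < ‖1 - (lam : ℂ) * ρ - μ j‖)
    (hsmall : Real.exp (u / lam) / (∏ j, (‖1 - (lam : ℂ) * ρ - μ j‖ - lam)) < 1/2)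
    (R : ℕ → ℂ) (rr : ℕ → ℝ)
    (hR : ∀ l : ℕ, 1 ≤ l → 0 < rr l ∧
      (∀ s : ℂ, s ≠ ρ - (l : ℂ) / (lam : ℂ) →
        ‖s - (ρ - (l : ℂ) / (lam : ℂ))‖ ≤ rr l → DifferentiableAt ℂ g s) ∧
      R l = (2 * (π : ℂ) * I)⁻¹ * ∮ s in C(ρ - (l : ℂ) / (lam : ℂ), rr l), g s) :
    (Summable fun l : ℕ => ‖R (l + 1)‖) ∧
      ‖∑' l : ℕ, R (l + 1)‖ <
        (Finset.Icc 1 n).sup' (Finset.nonempty_Icc.mpr hn) fun j => ‖c j‖ :=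
  residue_tail_bound_general u η lam hlam₁ f μ g hg ρ n hn c hcn hpolar hρre hρabs hsmall R rr hR
end
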